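/- Let N be a positive integer, 1 ≤ k ≤ N, f a real-valued function on S(k) := {ξ ∈ {0,1}^N : Σᵢ ξᵢ = k}, and fix an index j. For p ∈ (0,1)^N define wᵢ = pᵢ/(1 − pᵢ), P(ξ | p, k) = (Πᵢ wᵢ^{ξᵢ}) / e_k(w), πⱼ = wⱼ e_{k−1}(w_{−j}) / e_k(w), and F_k(p) := Σ_{ξ ∈ S(k)} f(ξ) P(ξ | p, k). Then the partial derivative of F_k with respect to pⱼ exists at every p ∈ (0,1)^N and equals Σ_{ξ ∈ S(k)} f(ξ) P(ξ | p, k) · (ξⱼ − πⱼ)(1 + wⱼ)² / wⱼ, i.e. ∂F_k/∂pⱼ = E_{ξ ∼ P(·|p,k)}[f(ξ) ∂ log P(ξ | p, k)/∂pⱼ]. -/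

import Mathlib

open Finset

/-- The weights `wᵢ = pᵢ/(1 − pᵢ)` of the conditional Bernoulli model. -/
noncomputable def cbWeight {N : ℕ} (p : Fin N → ℝ) (i : Fin N) : ℝ :=
  p i / (1 - p i)

/-- `e_k(w(p))`: the `k`-th elementary symmetric polynomial of the weights. -/
noncomputable def cbEsymm {N : ℕ} (k : ℕ) (p : Fin N → ℝ) : ℝ :=
  ∑ S ∈ (univ : Finset (Fin N)).powersetCard k, ∏ i ∈ S, cbWeight p i

/-- `P(ξ | p, k) = (Πᵢ wᵢ^{ξᵢ}) / e_k(w)`: the conditional Bernoulli PMF. -/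
noncomputable def cbPMF {N : ℕ} (k : ℕ) (p : Fin N → ℝ)
    (ξ : Fin N → Fin 2) : ℝ :=
  (∏ i, cbWeight p i ^ (ξ i : ℕ)) / cbEsymm k p

/-- `πⱼ = wⱼ e_{k−1}(w_{−j}) / e_k(w)`: first-order inclusion probability. -/
noncomputable def cbInclusion {N : ℕ} (k : ℕ) (j : Fin N) (p : Fin N → ℝ) : ℝ :=
  cbWeight p j
    * (∑ S ∈ ((univ : Finset (Fin N)).erase j).powersetCard (k - 1),
        ∏ i ∈ S, cbWeight p i)
    / cbEsymm k p

/-!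
Only the factor `w_j ^ ξ_j` of the numerator of `P(ξ | p, k)` and, through the expansion
`e_k(w) = w_j e_{k-1}(w_{-j}) + e_k(w_{-j})`, the denominator depend on `p_j`, and both only
through `w_j = p_j / (1 - p_j)`, whose derivative is `(1 + w_j)²`. The logarithmic derivative of
`w ↦ w ^ ε C / (w a + b)` is `(ε - w a / (w a + b)) / w`, which at `ε = ξ_j` is
`(ξ_j - π_j) / w_j`; summing over `ξ` against `f` gives the claim.
-/

theorem Multiset.esymm_cons_succ {R : Type*} [CommSemiring R] (a : R) (s : Multiset R) (n : ℕ) :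
    (a ::ₘ s).esymm (n + 1) = a * s.esymm n + s.esymm (n + 1) := by
  simp [Multiset.esymm, Multiset.powersetCard_cons, Multiset.map_map,
    Multiset.sum_map_mul_left, add_comm]

theorem hasDerivAt_pow_mul_div_mul_add {u : ℝ → ℝ} {u' x : ℝ} (n : ℕ) (C a b : ℝ)
    (hu : HasDerivAt u u' x) (hux : u x ≠ 0) (hden : u x * a + b ≠ 0) :
    HasDerivAt (fun t => u t ^ n * C / (u t * a + b))
      (u x ^ n * C / (u x * a + b) * ((n - u x * a / (u x * a + b)) * u' / u x)) x := by
  refine (((hu.pow n).mul_const C).div ((hu.mul_const a).add_const b) hden).congr_deriv ?_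
  rw [Pi.pow_apply]
  cases n with
  | zero => simp only [Nat.cast_zero, zero_mul, zero_sub, pow_zero]; field_simp
  | succ m => rw [Nat.add_sub_cancel, pow_succ]; field_simp

/-- `e_k(w_{-j})`. -/
noncomputable def cbEsymmErase {N : ℕ} (k : ℕ) (j : Fin N) (p : Fin N → ℝ) : ℝ :=
  ∑ S ∈ (univ.erase j).powersetCard k, ∏ i ∈ S, cbWeight p i

section

variable {N : ℕ} {k : ℕ} {j : Fin N} {p : Fin N → ℝ}

theorem cbWeight_pos {i : Fin N} (hp : p i ∈ Set.Ioo (0 : ℝ) 1) : 0 < cbWeight p i :=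
  div_pos hp.1 (sub_pos.2 hp.2)

theorem cbEsymm_pos (hkN : k ≤ N) (hw : ∀ i, 0 < cbWeight p i) : 0 < cbEsymm k p :=
  sum_pos (fun S _ => prod_pos fun i _ => hw i)
    (powersetCard_nonempty.2 (by simpa using hkN))

theorem cbEsymm_eq_add (hk : 1 ≤ k) (j : Fin N) (p : Fin N → ℝ) :
    cbEsymm k p = cbWeight p j * cbEsymmErase (k - 1) j p + cbEsymmErase k j p := by
  obtain ⟨m, rfl⟩ : ∃ m, k = m + 1 := ⟨k - 1, by omega⟩
  have hval : (univ : Finset (Fin N)).val.map (cbWeight p)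
      = cbWeight p j ::ₘ (univ.erase j).val.map (cbWeight p) := by
    rw [← Multiset.map_cons, ← insert_val_of_notMem (notMem_erase j univ),
      insert_erase (mem_univ j)]
  simp only [cbEsymm, cbEsymmErase, ← esymm_map_val, hval, Multiset.esymm_cons_succ,
    Nat.add_sub_cancel]

theorem cbPMF_eq_mul_prod_erase (k : ℕ) (j : Fin N) (p : Fin N → ℝ) (ξ : Fin N → Fin 2) :
    cbPMF k p ξ = cbWeight p j ^ (ξ j : ℕ)
      * (∏ i ∈ univ.erase j, cbWeight p i ^ (ξ i : ℕ)) / cbEsymm k p := by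
  rw [cbPMF, ← mul_prod_erase univ (fun i => cbWeight p i ^ (ξ i : ℕ)) (mem_univ j)]

theorem cbWeight_update_of_ne (t : ℝ) {i : Fin N} (hij : i ≠ j) :
    cbWeight (Function.update p j t) i = cbWeight p i := by
  simp [cbWeight, Function.update_of_ne hij]

theorem prod_cbWeight_update_of_subset_erase (t : ℝ) (g : Fin N → ℝ → ℝ) {S : Finset (Fin N)}
    (hS : S ⊆ univ.erase j) :
    ∏ i ∈ S, g i (cbWeight (Function.update p j t) i) = ∏ i ∈ S, g i (cbWeight p i) :=
  prod_congr rfl fun i hi => by rw [cbWeight_update_of_ne t (ne_of_mem_erase (hS hi))]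

theorem cbEsymmErase_update (n : ℕ) (t : ℝ) :
    cbEsymmErase n j (Function.update p j t) = cbEsymmErase n j p :=
  sum_congr rfl fun _ hS =>
    prod_cbWeight_update_of_subset_erase t (fun _ w => w) (mem_powersetCard.1 hS).1

theorem hasDerivAt_cbWeight_update (hpj : p j ≠ 1) :
    HasDerivAt (fun t => cbWeight (Function.update p j t) j) ((1 + cbWeight p j) ^ 2) (p j) := by
  have h1 : 1 - p j ≠ 0 := sub_ne_zero.2 hpj.symm
  simp only [cbWeight, Function.update_self]
  refine ((hasDerivAt_id _).div ((hasDerivAt_id _).const_sub 1) h1).congr_deriv ?_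
  field_simp
  ring

theorem hasDerivAt_cbPMF_update (hk : 1 ≤ k) (hpj : p j ∈ Set.Ioo (0 : ℝ) 1)
    (hE : cbEsymm k p ≠ 0) (ξ : Fin N → Fin 2) :
    HasDerivAt (fun t => cbPMF k (Function.update p j t) ξ)
      (cbPMF k p ξ * (((ξ j : ℕ) - cbInclusion k j p)
        * (1 + cbWeight p j) ^ 2 / cbWeight p j)) (p j) := by
  set C := ∏ i ∈ univ.erase j, cbWeight p i ^ (ξ i : ℕ)
  have hfun : (fun t => cbPMF k (Function.update p j t) ξ) = fun t =>
      cbWeight (Function.update p j t) j ^ (ξ j : ℕ) * C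
        / (cbWeight (Function.update p j t) j * cbEsymmErase (k - 1) j p
          + cbEsymmErase k j p) := by
    funext t
    rw [cbPMF_eq_mul_prod_erase k j, cbEsymm_eq_add hk j, cbEsymmErase_update,
      cbEsymmErase_update,
      prod_cbWeight_update_of_subset_erase t (fun i w => w ^ (ξ i : ℕ)) subset_rfl]
  have hderiv := hasDerivAt_pow_mul_div_mul_add (ξ j : ℕ) C
    (cbEsymmErase (k - 1) j p) (cbEsymmErase k j p) (hasDerivAt_cbWeight_update hpj.2.ne)
  simp only [Function.update_eq_self, ← cbEsymm_eq_add hk] at hderiv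
  rw [hfun, cbPMF_eq_mul_prod_erase k j]
  exact hderiv (cbWeight_pos hpj).ne' hE

end

theorem stmt_19_general (N : ℕ) (k : ℕ) (hk1 : 1 ≤ k) (hkN : k ≤ N)
    (f : (Fin N → Fin 2) → ℝ) (j : Fin N)
    (Fk : (Fin N → ℝ) → ℝ)
    (hFk : ∀ p, Fk p =
      ∑ ξ ∈ univ.filter (fun ξ : Fin N → Fin 2 => (∑ i, (ξ i : ℕ)) = k),
        f ξ * cbPMF k p ξ)
    (p : Fin N → ℝ) (hp : ∀ i, p i ∈ Set.Ioo (0 : ℝ) 1) :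
    HasDerivAt (fun t : ℝ => Fk (Function.update p j t))
      (∑ ξ ∈ univ.filter (fun ξ : Fin N → Fin 2 => (∑ i, (ξ i : ℕ)) = k),
        f ξ * cbPMF k p ξ
          * (((ξ j : ℕ) - cbInclusion k j p)
              * (1 + cbWeight p j) ^ 2 / cbWeight p j))
      (p j) := by
  have hE : cbEsymm k p ≠ 0 := (cbEsymm_pos hkN fun i => cbWeight_pos (hp i)).ne'
  simp only [hFk, mul_assoc]
  exact HasDerivAt.fun_sum fun ξ _ =>
    (hasDerivAt_cbPMF_update hk1 (hp j) hE ξ).const_mul (f ξ)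

/-- Exact score-function (log-derivative) form of the policy gradient of the
budget-constrained stochastic ROED objective: the partial derivative of
`F_k(p) = Σ_{ξ ∈ S(k)} f(ξ) P(ξ | p, k)` with respect to `pⱼ` exists at every
`p ∈ (0,1)^N` and equals
`Σ_{ξ ∈ S(k)} f(ξ) P(ξ | p, k) (ξⱼ − πⱼ)(1 + wⱼ)²/wⱼ`. -/
theorem stmt_19 (N : ℕ) (hN : 0 < N) (k : ℕ) (hk1 : 1 ≤ k) (hkN : k ≤ N)
    (f : (Fin N → Fin 2) → ℝ) (j : Fin N)
    (Fk : (Fin N → ℝ) → ℝ)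
    (hFk : ∀ p, Fk p =
      ∑ ξ ∈ univ.filter (fun ξ : Fin N → Fin 2 => (∑ i, (ξ i : ℕ)) = k),
        f ξ * cbPMF k p ξ)
    (p : Fin N → ℝ) (hp : ∀ i, p i ∈ Set.Ioo (0 : ℝ) 1) :
    HasDerivAt (fun t : ℝ => Fk (Function.update p j t))
      (∑ ξ ∈ univ.filter (fun ξ : Fin N → Fin 2 => (∑ i, (ξ i : ℕ)) = k),
        f ξ * cbPMF k p ξ
          * (((ξ j : ℕ) - cbInclusion k j p)
              * (1 + cbWeight p j) ^ 2 / cbWeight p j))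
      (p j) :=
  stmt_19_general N k hk1 hkN f j Fk hFk p hp
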